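/- arXiv:2510.17300 — 4 statements merged into one kernel-verified Lean document; each statement's English description precedes it below -/
import Mathlib

section
/- Counterexample to the Li–Zhang–Ma conjecture: for the degree-11 rational Bézier function with weights ω = (1, 1/2, 1/4, 1/8, 1/16, 1/32, 1/64, 1/128, 1/256, 1/512, 1/1024, 1/512) and control points p_i = i (i = 0,…,11), there exists t ∈ [0,1] such that |r'(t)| > 11·ω_max·max_i |p_{i+1} − p_i| = 22, where ω_max = max over i of max(ω_i/ω_{i+1}, ω_{i+1}/ω_i) = 2. -/
/-- Bernstein polynomial `B_i^n(t) = C(n,i) t^i (1-t)^(n-i)`. -/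
def bern (n i : ℕ) (t : ℝ) : ℝ := (n.choose i : ℝ) * t ^ i * (1 - t) ^ (n - i)

/-- The weights of the degree-11 counterexample. -/
noncomputable def cw : Fin 12 → ℝ :=
  ![1, 1/2, 1/4, 1/8, 1/16, 1/32, 1/64, 1/128, 1/256, 1/512, 1/1024, 1/512]

lemma den_pos {t : ℝ} (h0 : 0 < t) (h1 : t < 1) :
    0 < ∑ i : Fin 12, cw i * bern 11 i t := by
  have h1' : 0 < 1 - t := by linarith
  apply Finset.sum_pos _ ⟨0, by norm_num⟩
  intro i _
  fin_cases i <;> norm_num [cw, bern, Matrix.cons_val_succ, Matrix.cons_val_zero, Nat.choose] <;> positivity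

set_option maxHeartbeats 2000000 in
theorem stmt_9
    (r : ℝ → ℝ)
    (hr : r = fun t => (∑ i : Fin 12, cw i * (i : ℝ) * bern 11 i t) /
      (∑ i : Fin 12, cw i * bern 11 i t)) :
    ∃ t ∈ Set.Icc (0 : ℝ) 1, |deriv r t| > 22 := by
  have hN : ∀ t : ℝ, DifferentiableAt ℝ
      (fun t => ∑ i : Fin 12, cw i * (i : ℝ) * bern 11 i t) t := by
    intro t
    apply DifferentiableAt.fun_sum
    intro i _
    simp only [bern]
    fun_prop
  have hD : ∀ t : ℝ, DifferentiableAt ℝ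
      (fun t => ∑ i : Fin 12, cw i * bern 11 i t) t := by
    intro t
    apply DifferentiableAt.fun_sum
    intro i _
    simp only [bern]
    fun_prop
  have hdiff : ∀ t ∈ Set.Icc (22/25 : ℝ) (9/10), DifferentiableAt ℝ r t := by
    intro t ht
    have h0 : (0:ℝ) < t := by have := ht.1; linarith
    have h1 : t < 1 := by have := ht.2; linarith
    rw [hr]
    exact (hN t).div (hD t) (ne_of_gt (den_pos h0 h1))
  have hab : (22/25 : ℝ) < 9/10 := by norm_num
  obtain ⟨c, hc, hderiv⟩ := exists_deriv_eq_slope r hab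
    (fun t ht => (hdiff t ht).continuousAt.continuousWithinAt)
    (fun t ht => (hdiff t (Set.Ioo_subset_Icc_self ht)).differentiableWithinAt)
  refine ⟨c, ⟨by linarith [hc.1], by linarith [hc.2]⟩, ?_⟩
  have key : (r (9/10) - r (22/25)) / ((9:ℝ)/10 - 22/25) > 22 := by
    subst hr
    norm_num [cw, bern, Fin.sum_univ_succ, Matrix.cons_val_succ, Matrix.cons_val_zero, Nat.choose]
  rw [hderiv]
  calc (22:ℝ) < (r (9/10) - r (22/25)) / ((9:ℝ)/10 - 22/25) := key
    _ ≤ |(r (9/10) - r (22/25)) / ((9:ℝ)/10 - 22/25)| := le_abs_self _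
end

section
/- Zhang–Ma bound for n = 2: for any rational Bézier curve of degree 2 with positive weights ω_0, ω_1, ω_2 and control points p_0, p_1, p_2 ∈ ℝ^d, ‖r'(t)‖ ≤ 2ω·max(‖p_1 − p_0‖, ‖p_2 − p_1‖) for all t ∈ [0,1], where ω = max(ω_0/ω_1, ω_1/ω_0, ω_1/ω_2, ω_2/ω_1). -/
/-!
With `W` the denominator, the quotient rule and the identities `B₀B₁' - B₀'B₁ = 2(1-t)²`,
`B₀B₂' - B₀'B₂ = 2t(1-t)`, `B₁B₂' - B₁'B₂ = 2t²` give
`r' = 2/W² · (ω₀ω₁(1-t)² (p₁-p₀) + ω₀ω₂ t(1-t) (p₂-p₀) + ω₁ω₂ t² (p₂-p₁))`.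
As `p₂ - p₀ = (p₂ - p₁) + (p₁ - p₀)`, it suffices that
`ω₀ω₁(1-t)² + 2ω₀ω₂ t(1-t) + ω₁ω₂ t² ≤ ω W²`. After multiplying the left side by
`((1-t) + t)² = 1`, both sides are quartics in the degree-four Bernstein basis, and the ratio
bounds `ωᵢ ≤ ω ωⱼ` for neighbouring weights compare them coefficient by coefficient.
-/

open Set

lemma bern_two_zero (t : ℝ) : bern 2 0 t = (1 - t) ^ 2 := by simp [bern]

lemma bern_two_one (t : ℝ) : bern 2 1 t = 2 * (t * (1 - t)) := by simp [bern]; ring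

lemma bern_two_two (t : ℝ) : bern 2 2 t = t ^ 2 := by simp [bern]

lemma hasDerivAt_bern_two_zero (t : ℝ) : HasDerivAt (bern 2 0) (-(2 * (1 - t))) t := by
  rw [funext bern_two_zero]
  refine (((hasDerivAt_id' t).const_sub 1).fun_pow 2).congr_deriv ?_
  norm_num

lemma hasDerivAt_bern_two_one (t : ℝ) : HasDerivAt (bern 2 1) (2 * (1 - 2 * t)) t := by
  rw [funext bern_two_one]
  refine (((hasDerivAt_id' t).fun_mul ((hasDerivAt_id' t).const_sub 1)).const_mul 2).congr_deriv ?_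
  ring

lemma hasDerivAt_bern_two_two (t : ℝ) : HasDerivAt (bern 2 2) (2 * t) t := by
  rw [funext bern_two_two]
  refine (hasDerivAt_pow 2 t).congr_deriv ?_
  norm_num

section RationalBezier

variable {E : Type*} [NormedAddCommGroup E] [NormedSpace ℝ E]

def quadWeight (ω0 ω1 ω2 t : ℝ) : ℝ := ω0 * bern 2 0 t + ω1 * bern 2 1 t + ω2 * bern 2 2 t

noncomputable def quadRatBezier (ω0 ω1 ω2 : ℝ) (p0 p1 p2 : E) (t : ℝ) : E :=
  (quadWeight ω0 ω1 ω2 t)⁻¹ •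
    ((ω0 * bern 2 0 t) • p0 + (ω1 * bern 2 1 t) • p1 + (ω2 * bern 2 2 t) • p2)

lemma quadWeight_pos {ω0 ω1 ω2 t : ℝ} (h0 : 0 < ω0) (h1 : 0 ≤ ω1) (h2 : 0 < ω2)
    (ht : t ∈ Icc (0 : ℝ) 1) : 0 < quadWeight ω0 ω1 ω2 t := by
  obtain ⟨ht0, ht1⟩ := ht
  have hs : 0 ≤ 1 - t := sub_nonneg.2 ht1
  have hends : 0 < ω0 * (1 - t) ^ 2 + ω2 * t ^ 2 := by
    rcases eq_or_lt_of_le ht0 with rfl | ht0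
    · simpa using h0
    · positivity
  rw [quadWeight, bern_two_zero, bern_two_one, bern_two_two]
  nlinarith [show 0 ≤ ω1 * (2 * (t * (1 - t))) by positivity]

theorem hasDerivAt_quadRatBezier (ω0 ω1 ω2 : ℝ) (p0 p1 p2 : E) {t : ℝ}
    (hW : quadWeight ω0 ω1 ω2 t ≠ 0) :
    HasDerivAt (quadRatBezier ω0 ω1 ω2 p0 p1 p2)
      ((2 / quadWeight ω0 ω1 ω2 t ^ 2) •
        ((ω0 * ω1 * (1 - t) ^ 2) • (p1 - p0) + (ω0 * ω2 * (t * (1 - t))) • (p2 - p0) +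
          (ω1 * ω2 * t ^ 2) • (p2 - p1))) t := by
  have hB0 := (hasDerivAt_bern_two_zero t).const_mul ω0
  have hB1 := (hasDerivAt_bern_two_one t).const_mul ω1
  have hB2 := (hasDerivAt_bern_two_two t).const_mul ω2
  have hW' : HasDerivAt (quadWeight ω0 ω1 ω2) _ t := (hB0.add hB1).add hB2
  have hN : HasDerivAt
      (fun y => (ω0 * bern 2 0 y) • p0 + (ω1 * bern 2 1 y) • p1 + (ω2 * bern 2 2 y) • p2) _ t :=
    ((hB0.smul_const p0).add (hB1.smul_const p1)).add (hB2.smul_const p2)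
  refine ((hW'.fun_inv hW).fun_smul hN).congr_deriv ?_
  simp only [quadWeight, bern_two_zero, bern_two_one, bern_two_two] at hW ⊢
  match_scalars <;> field_simp <;> ring

lemma norm_smul_sub_add_le {a b c : ℝ} (ha : 0 ≤ a) (hb : 0 ≤ b) (hc : 0 ≤ c) (p0 p1 p2 : E) :
    ‖a • (p1 - p0) + b • (p2 - p0) + c • (p2 - p1)‖ ≤
      (a + 2 * b + c) * max ‖p1 - p0‖ ‖p2 - p1‖ := by
  set M := max ‖p1 - p0‖ ‖p2 - p1‖
  have h10 : ‖p1 - p0‖ ≤ M := le_max_left _ _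
  have h21 : ‖p2 - p1‖ ≤ M := le_max_right _ _
  have h20 : ‖p2 - p0‖ ≤ 2 * M := by
    calc ‖p2 - p0‖ = ‖(p2 - p1) + (p1 - p0)‖ := by rw [sub_add_sub_cancel]
      _ ≤ ‖p2 - p1‖ + ‖p1 - p0‖ := norm_add_le _ _
      _ ≤ 2 * M := by linarith
  calc ‖a • (p1 - p0) + b • (p2 - p0) + c • (p2 - p1)‖
      ≤ a * ‖p1 - p0‖ + b * ‖p2 - p0‖ + c * ‖p2 - p1‖ := by
        refine (norm_add₃_le).trans ?_
        simp only [norm_smul, Real.norm_of_nonneg ha, Real.norm_of_nonneg hb,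
          Real.norm_of_nonneg hc, le_refl]
    _ ≤ a * M + b * (2 * M) + c * M := by gcongr
    _ = (a + 2 * b + c) * M := by ring

end RationalBezier

section WeightInequality

variable {a b c ω : ℝ}

lemma middle_coeff_le (ha : 0 < a) (hb : 0 < b) (hc : 0 < c) (hω : 1 ≤ ω)
    (hab : a ≤ ω * b) (hcb : c ≤ ω * b) :
    a * b + 4 * (a * c) + b * c ≤ ω * (4 * b ^ 2 + 2 * (a * c)) := by
  have hsides : a * b + b * c ≤ 2 * ω * b ^ 2 := by nlinarith
  rcases le_total 2 ω with h2 | h2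
  · nlinarith [mul_pos ha hc]
  · -- `ac ≤ ω²b²` and `ω(2 - ω) ≤ 1`
    have hac : a * c ≤ ω ^ 2 * b ^ 2 := by
      nlinarith [mul_le_mul hab hcb hc.le (by positivity)]
    have : (2 - ω) * (a * c) ≤ ω * b ^ 2 := by
      nlinarith [mul_le_mul_of_nonneg_left hac (sub_nonneg.2 h2),
        mul_nonneg (mul_nonneg (by linarith : (0 : ℝ) ≤ ω) (sq_nonneg (ω - 1))) (sq_nonneg b)]
    nlinarith

lemma weight_products_le_mul_sq (ha : 0 < a) (hb : 0 < b) (hc : 0 < c)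
    (hab : a ≤ ω * b) (hba : b ≤ ω * a) (hbc : b ≤ ω * c) (hcb : c ≤ ω * b)
    {s t : ℝ} (hs : 0 ≤ s) (ht : 0 ≤ t) (hst : s + t = 1) :
    a * b * s ^ 2 + 2 * (a * c * (t * s)) + b * c * t ^ 2 ≤
      ω * (a * s ^ 2 + b * (2 * (t * s)) + c * t ^ 2) ^ 2 := by
  have hω : 1 ≤ ω := by nlinarith
  have c0 : a * b ≤ ω * a ^ 2 := by nlinarith
  have c1 : 2 * (a * b) + 2 * (a * c) ≤ 4 * ω * (a * b) := by nlinarith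
  have c2 := middle_coeff_le ha hb hc hω hab hcb
  have c3 : 2 * (a * c) + 2 * (b * c) ≤ 4 * ω * (b * c) := by nlinarith
  have c4 : b * c ≤ ω * c ^ 2 := by nlinarith
  calc a * b * s ^ 2 + 2 * (a * c * (t * s)) + b * c * t ^ 2
      = (a * b * s ^ 2 + 2 * (a * c * (t * s)) + b * c * t ^ 2) * (s + t) ^ 2 := by
        rw [hst]; ring
    _ = a * b * s ^ 4 + (2 * (a * b) + 2 * (a * c)) * (s ^ 3 * t)
          + (a * b + 4 * (a * c) + b * c) * (s ^ 2 * t ^ 2)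
          + (2 * (a * c) + 2 * (b * c)) * (s * t ^ 3) + b * c * t ^ 4 := by ring
    _ ≤ ω * a ^ 2 * s ^ 4 + 4 * ω * (a * b) * (s ^ 3 * t)
          + ω * (4 * b ^ 2 + 2 * (a * c)) * (s ^ 2 * t ^ 2)
          + 4 * ω * (b * c) * (s * t ^ 3) + ω * c ^ 2 * t ^ 4 := by gcongr
    _ = ω * (a * s ^ 2 + b * (2 * (t * s)) + c * t ^ 2) ^ 2 := by ring

end WeightInequality

theorem stmt_15 {E : Type*} [NormedAddCommGroup E] [NormedSpace ℝ E]
    (ω0 ω1 ω2 : ℝ) (h0 : 0 < ω0) (h1 : 0 < ω1) (h2 : 0 < ω2)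
    (p0 p1 p2 : E)
    (r : ℝ → E)
    (hr : r = fun t =>
      (ω0 * bern 2 0 t + ω1 * bern 2 1 t + ω2 * bern 2 2 t)⁻¹ •
        ((ω0 * bern 2 0 t) • p0 + (ω1 * bern 2 1 t) • p1 + (ω2 * bern 2 2 t) • p2)) :
    ∀ t ∈ Set.Icc (0 : ℝ) 1,
      ‖deriv r t‖ ≤
        2 * max (max (ω0 / ω1) (ω1 / ω0)) (max (ω1 / ω2) (ω2 / ω1)) *
          max ‖p1 - p0‖ ‖p2 - p1‖ := by
  intro t ht
  have ht0 : 0 ≤ t := ht.1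
  have hs : 0 ≤ 1 - t := sub_nonneg.2 ht.2
  set ω := max (max (ω0 / ω1) (ω1 / ω0)) (max (ω1 / ω2) (ω2 / ω1))
  set M := max ‖p1 - p0‖ ‖p2 - p1‖
  set W := quadWeight ω0 ω1 ω2 t
  have hW : 0 < W := quadWeight_pos h0 h1.le h2 ht
  have hratio {x y : ℝ} (hy : 0 < y) (hxy : x / y ≤ ω) : x ≤ ω * y := by
    rw [div_le_iff₀ hy] at hxy; linarith
  have hineq := weight_products_le_mul_sq h0 h1 h2
    (hratio h1 (by simp [ω])) (hratio h0 (by simp [ω])) (hratio h2 (by simp [ω]))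
    (hratio h1 (by simp [ω])) hs ht0 (sub_add_cancel 1 t)
  have hr' : r = quadRatBezier ω0 ω1 ω2 p0 p1 p2 := hr
  rw [hr', (hasDerivAt_quadRatBezier ω0 ω1 ω2 p0 p1 p2 hW.ne').deriv, norm_smul,
    Real.norm_of_nonneg (by positivity)]
  calc 2 / W ^ 2 * ‖_‖
      ≤ 2 / W ^ 2 *
          ((ω0 * ω1 * (1 - t) ^ 2 + 2 * (ω0 * ω2 * (t * (1 - t))) + ω1 * ω2 * t ^ 2) * M) := by
        gcongr
        exact norm_smul_sub_add_le (by positivity) (by positivity) (by positivity) p0 p1 p2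
    _ ≤ 2 / W ^ 2 * (ω * W ^ 2 * M) := by
        gcongr
        simpa only [W, quadWeight, bern_two_zero, bern_two_one, bern_two_two] using hineq
    _ = 2 * ω * M := by field_simp
end

section
/- Numerator formula for the derivative: for a rational Bézier curve of degree n, ω(t)^2 · r'(t) = ∑_{i=0}^{2n-2} B_i^{2n-2}(t) D_i, where D_i = (1/C(2n−2,i)) ∑_{j=max(0,i−n+1)}^{⌊i/2⌋} (i−2j+1) C(n,j) C(n,i−j+1) ω_j ω_{i−j+1} (p_{i−j+1} − p_j), valid for the case n = 2 (i.e., ω(t)^2 r'(t) = ∑_{i=0}^{2} B_i^2(t) D_i). -/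
open Finset

theorem bern_nonneg (n i : ℕ) {t : ℝ} (ht : t ∈ Set.Icc (0 : ℝ) 1) : 0 ≤ bern n i t := by
  have ht₀ : 0 ≤ t := ht.1
  have ht₁ : 0 ≤ 1 - t := sub_nonneg.2 ht.2
  unfold bern
  positivity

theorem sum_bern (n : ℕ) (t : ℝ) : ∑ i ∈ range (n + 1), bern n i t = 1 := by
  have h := (add_pow t (1 - t) n).symm
  rw [add_sub_cancel, one_pow] at h
  rw [← h]
  exact sum_congr rfl fun i _ => by unfold bern; ring

theorem sum_mul_bern_pos {n : ℕ} {ω : ℕ → ℝ} (hω : ∀ i ≤ n, 0 < ω i) {t : ℝ}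
    (ht : t ∈ Set.Icc (0 : ℝ) 1) : 0 < ∑ i ∈ range (n + 1), ω i * bern n i t := by
  have hmem : ∀ i ∈ range (n + 1), 0 < ω i := fun i hi =>
    hω i (Nat.lt_succ_iff.1 (mem_range.1 hi))
  obtain ⟨i, hi, hpos⟩ : ∃ i ∈ range (n + 1), 0 < bern n i t := by
    by_contra! h
    have : ∑ i ∈ range (n + 1), bern n i t = 0 :=
      sum_eq_zero fun i hi => le_antisymm (h i hi) (bern_nonneg n i ht)
    simp [sum_bern] at this
  exact sum_pos' (fun j hj => mul_nonneg (hmem j hj).le (bern_nonneg n j ht))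
    ⟨i, hi, mul_pos (hmem i hi) hpos⟩

-- For `i = 0` or `i = n` the truncated exponents only occur next to a vanishing factor.
def bernDeriv (n i : ℕ) (t : ℝ) : ℝ :=
  n.choose i * (i * t ^ (i - 1) * (1 - t) ^ (n - i) - (n - i : ℕ) * t ^ i * (1 - t) ^ (n - i - 1))

theorem hasDerivAt_bern (n i : ℕ) (t : ℝ) : HasDerivAt (bern n i) (bernDeriv n i t) t := by
  have hpow : HasDerivAt (fun s : ℝ => (1 - s) ^ (n - i))
      ((n - i : ℕ) * (1 - t) ^ (n - i - 1) * -1) t :=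
    ((hasDerivAt_id t).const_sub 1).pow (n - i)
  have hbern : bern n i = fun s => (n.choose i : ℝ) * (s ^ i * (1 - s) ^ (n - i)) := by
    funext s; simp only [bern, mul_assoc]
  rw [hbern]
  exact (((hasDerivAt_pow i t).mul hpow).const_mul _).congr_deriv (by unfold bernDeriv; ring)

theorem sq_smul_deriv_inv_smul {E : Type*} [NormedAddCommGroup E] [NormedSpace ℝ E]
    {w : ℝ → ℝ} {P : ℝ → E} {w' t : ℝ} {P' : E} (hw : HasDerivAt w w' t) (hP : HasDerivAt P P' t)
    (hwt : w t ≠ 0) :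
    w t ^ 2 • deriv (fun s => (w s)⁻¹ • P s) t = w t • P' - w' • P t := by
  change w t ^ 2 • deriv (w⁻¹ • P) t = _
  rw [((hw.inv hwt).smul hP).deriv, Pi.inv_apply, smul_add, smul_smul, smul_smul, sq,
    mul_inv_cancel_right₀ hwt, ← sq, mul_div_cancel₀ _ (pow_ne_zero 2 hwt), neg_smul, sub_eq_add_neg]

theorem quadratic_numerator {E : Type*} [AddCommGroup E] [Module ℝ E] (ω : ℕ → ℝ) (p : ℕ → E)
    (t : ℝ) :
    (∑ i ∈ range 3, ω i * bern 2 i t) • ∑ i ∈ range 3, (ω i * bernDeriv 2 i t) • p i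
      - (∑ i ∈ range 3, ω i * bernDeriv 2 i t) • ∑ i ∈ range 3, (ω i * bern 2 i t) • p i
      = bern 2 0 t • (2 * ω 0 * ω 1) • (p 1 - p 0) + bern 2 1 t • (ω 0 * ω 2) • (p 2 - p 0)
        + bern 2 2 t • (2 * ω 1 * ω 2) • (p 2 - p 1) := by
  simp only [sum_range_succ, sum_range_zero, bern, bernDeriv]
  norm_num
  module

theorem stmt_16 {E : Type*} [NormedAddCommGroup E] [NormedSpace ℝ E]
    (ω : ℕ → ℝ) (hω : ∀ i ≤ 2, 0 < ω i) (p : ℕ → E)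
    (w : ℝ → ℝ) (hw : w = fun t => ∑ i ∈ Finset.range 3, ω i * bern 2 i t)
    (r : ℝ → E)
    (hr : r = fun t => (w t)⁻¹ • ∑ i ∈ Finset.range 3, (ω i * bern 2 i t) • p i)
    (D : ℕ → E)
    (hD : D = fun i => (1 / ((2 : ℕ).choose i : ℝ)) •
      ∑ j ∈ Finset.Icc (i - 1) (i / 2),
        (((i : ℝ) - 2 * (j : ℝ) + 1) * ((2 : ℕ).choose j : ℝ) *
          ((2 : ℕ).choose (i - j + 1) : ℝ) * ω j * ω (i - j + 1)) •
          (p (i - j + 1) - p j)) :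
    ∀ t ∈ Set.Icc (0 : ℝ) 1,
      (w t) ^ 2 • deriv r t = ∑ i ∈ Finset.range 3, bern 2 i t • D i := by
  intro t ht
  have hwt : 0 < w t := hw ▸ sum_mul_bern_pos hω ht
  have hw' : HasDerivAt w (∑ i ∈ range 3, ω i * bernDeriv 2 i t) t :=
    hw ▸ HasDerivAt.fun_sum fun i _ => (hasDerivAt_bern 2 i t).const_mul (ω i)
  have hP' : HasDerivAt (fun s => ∑ i ∈ range 3, (ω i * bern 2 i s) • p i)
      (∑ i ∈ range 3, (ω i * bernDeriv 2 i t) • p i) t :=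
    HasDerivAt.fun_sum fun i _ => ((hasDerivAt_bern 2 i t).const_mul (ω i)).smul_const (p i)
  rw [hr, sq_smul_deriv_inv_smul hw' hP' hwt.ne', hw, quadratic_numerator, hD]
  simp only [sum_range_succ, sum_range_zero]
  norm_num [Finset.Icc_self]
  module
end

section
/- Supremum bound (Theorem 2 of the paper): if r'(t) = (∑_{j=0}^{m} A_j B_j^m(t)) / (∑_{j=0}^m w_j B_j^m(t)) with all w_j > 0, then for every e ≥ 0 and t ∈ [0,1], ‖r'(t)‖ ≤ max_{0≤i≤m+e} ‖∑_{j} C(m,j)C(e,i−j) A_j‖ / (∑_{j} C(m,j)C(e,i−j) w_j), where both interior sums range over max(0,i−e) ≤ j ≤ min(m,i). -/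
lemma bern_sum_eq_one (n : ℕ) (t : ℝ) :
    ∑ k ∈ Finset.range (n + 1), bern n k t = 1 := by
  have h := add_pow t (1 - t) n
  simp only [add_sub_cancel, one_pow] at h
  rw [eq_comm, h]
  exact Finset.sum_congr rfl fun k hk => by unfold bern; ring

lemma key_reindex {M : Type*} [AddCommMonoid M] (m e : ℕ) (F : ℕ → ℕ → M) :
    ∑ j ∈ Finset.range (m+1), ∑ k ∈ Finset.range (e+1), F j k
      = ∑ i ∈ Finset.range (m+e+1), ∑ j ∈ Finset.Icc (i-e) (min m i), F j (i-j) := by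
  rw [Finset.sum_sigma', Finset.sum_sigma']
  apply Finset.sum_nbij' (fun p => ⟨p.1 + p.2, p.1⟩) (fun p => ⟨p.2, p.1 - p.2⟩)
  · rintro ⟨j, k⟩ hp
    simp only [Finset.mem_sigma, Finset.mem_range, Finset.mem_Icc] at hp ⊢
    omega
  · rintro ⟨i, j⟩ hp
    simp only [Finset.mem_sigma, Finset.mem_range, Finset.mem_Icc] at hp ⊢
    omega
  · rintro ⟨j, k⟩ hp
    simp only [Finset.mem_sigma, Finset.mem_range] at hp
    simp only [Sigma.mk.inj_iff, heq_eq_eq]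
    exact ⟨trivial, by omega⟩
  · rintro ⟨i, j⟩ hp
    simp only [Finset.mem_sigma, Finset.mem_range, Finset.mem_Icc] at hp
    simp only [Sigma.mk.inj_iff, heq_eq_eq]
    exact ⟨by omega, trivial⟩
  · rintro ⟨j, k⟩ hp
    simp only [Finset.mem_sigma, Finset.mem_range] at hp
    simp

/-- Degree elevation of a Bernstein-form sum. -/
lemma elev {V : Type*} [AddCommGroup V] [Module ℝ V] (m e : ℕ) (t : ℝ) (c : ℕ → V) :
    ∑ j ∈ Finset.range (m+1), bern m j t • c j
      = ∑ i ∈ Finset.range (m+e+1), (t ^ i * (1-t) ^ (m+e-i)) •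
          ∑ j ∈ Finset.Icc (i-e) (min m i),
            ((m.choose j : ℝ) * (e.choose (i-j) : ℝ)) • c j := by
  have h1 : ∑ j ∈ Finset.range (m+1), bern m j t • c j
      = ∑ j ∈ Finset.range (m+1), ∑ k ∈ Finset.range (e+1),
          (bern m j t * bern e k t) • c j := by
    apply Finset.sum_congr rfl
    intro j _
    rw [← Finset.sum_smul, ← Finset.mul_sum, bern_sum_eq_one, mul_one]
  rw [h1, key_reindex m e (fun j k => (bern m j t * bern e k t) • c j)]
  apply Finset.sum_congr rfl
  intro i hi
  rw [Finset.mem_range] at hi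
  rw [Finset.smul_sum]
  apply Finset.sum_congr rfl
  intro j hj
  rw [Finset.mem_Icc] at hj
  rw [smul_smul]
  congr 1
  unfold bern
  have hjm : j ≤ m := le_trans hj.2 (min_le_left _ _)
  have hji : j ≤ i := le_trans hj.2 (min_le_right _ _)
  have ht' : t ^ j * t ^ (i - j) = t ^ i := by
    rw [← pow_add]; congr 1; omega
  have h1t : (1-t) ^ (m - j) * (1-t) ^ (e - (i - j)) = (1-t) ^ (m+e-i) := by
    rw [← pow_add]; congr 1; omega
  calc (m.choose j : ℝ) * t ^ j * (1 - t) ^ (m - j) *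
        ((e.choose (i-j) : ℝ) * t ^ (i-j) * (1 - t) ^ (e - (i-j)))
      = (t ^ j * t ^ (i-j)) * ((1-t) ^ (m-j) * (1-t) ^ (e-(i-j))) *
        ((m.choose j : ℝ) * (e.choose (i-j) : ℝ)) := by ring
    _ = t ^ i * (1-t) ^ (m+e-i) * ((m.choose j : ℝ) * (e.choose (i-j) : ℝ)) := by
        rw [ht', h1t]
    _ = _ := by ring

theorem stmt_18 {E : Type*} [NormedAddCommGroup E] [NormedSpace ℝ E]
    (m : ℕ) (A : ℕ → E) (w : ℕ → ℝ) (hw : ∀ j ≤ m, 0 < w j)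
    (r' : ℝ → E)
    (hr' : ∀ t ∈ Set.Icc (0 : ℝ) 1,
      r' t = (∑ j ∈ Finset.range (m + 1), w j * bern m j t)⁻¹ •
        ∑ j ∈ Finset.range (m + 1), bern m j t • A j)
    (e : ℕ) :
    ∀ t ∈ Set.Icc (0 : ℝ) 1,
      ‖r' t‖ ≤
        (Finset.range (m + e + 1)).sup'
          (Finset.nonempty_range_iff.mpr (Nat.succ_ne_zero _))
          (fun i =>
            ‖∑ j ∈ Finset.Icc (i - e) (min m i),
                ((m.choose j : ℝ) * (e.choose (i - j) : ℝ)) • A j‖ /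
              ∑ j ∈ Finset.Icc (i - e) (min m i),
                (m.choose j : ℝ) * (e.choose (i - j) : ℝ) * w j) := by
  intro t ht
  obtain ⟨ht0, ht1⟩ := ht
  have ht1' : (0:ℝ) ≤ 1 - t := by linarith
  set M := (Finset.range (m + e + 1)).sup'
      (Finset.nonempty_range_iff.mpr (Nat.succ_ne_zero _))
      (fun i =>
        ‖∑ j ∈ Finset.Icc (i - e) (min m i),
            ((m.choose j : ℝ) * (e.choose (i - j) : ℝ)) • A j‖ /
          ∑ j ∈ Finset.Icc (i - e) (min m i),
            (m.choose j : ℝ) * (e.choose (i - j) : ℝ) * w j) with hM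
  have hSw : ∀ i ∈ Finset.range (m + e + 1),
      0 < ∑ j ∈ Finset.Icc (i - e) (min m i),
          (m.choose j : ℝ) * (e.choose (i - j) : ℝ) * w j := by
    intro i hi
    rw [Finset.mem_range] at hi
    apply Finset.sum_pos'
    · intro j hj
      rw [Finset.mem_Icc] at hj
      have hjm : j ≤ m := le_trans hj.2 (min_le_left _ _)
      exact mul_nonneg (mul_nonneg (Nat.cast_nonneg _) (Nat.cast_nonneg _))
        (hw j hjm).le
    · refine ⟨min m i, Finset.mem_Icc.mpr ⟨by omega, le_refl _⟩, ?_⟩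
      have h1 : (0:ℝ) < m.choose (min m i) := by
        exact_mod_cast Nat.choose_pos (min_le_left m i)
      have h2 : (0:ℝ) < e.choose (i - min m i) := by
        exact_mod_cast Nat.choose_pos (by omega)
      exact mul_pos (mul_pos h1 h2) (hw (min m i) (min_le_left m i))
  have hpw : ∀ i, (0:ℝ) ≤ t ^ i * (1-t) ^ (m+e-i) :=
    fun i => mul_nonneg (pow_nonneg ht0 _) (pow_nonneg ht1' _)
  have hDe : ∑ j ∈ Finset.range (m+1), w j * bern m j t
      = ∑ i ∈ Finset.range (m+e+1), (t ^ i * (1-t) ^ (m+e-i)) *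
          ∑ j ∈ Finset.Icc (i-e) (min m i),
            (m.choose j : ℝ) * (e.choose (i-j) : ℝ) * w j := by
    have h := elev m e t w
    simp only [smul_eq_mul] at h
    rw [show ∑ j ∈ Finset.range (m+1), w j * bern m j t
        = ∑ j ∈ Finset.range (m+1), bern m j t * w j from
        Finset.sum_congr rfl fun j _ => mul_comm _ _, h]
  have hD : 0 < ∑ j ∈ Finset.range (m + 1), w j * bern m j t := by
    rw [hDe]
    apply Finset.sum_pos'
    · intro i hi
      exact mul_nonneg (hpw i) (hSw i hi).le
    · by_contra hcon
      push_neg at hcon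
      have hzero : ∀ i ∈ Finset.range (m+e+1), t ^ i * (1-t) ^ (m+e-i) = 0 := by
        intro i hi
        by_contra hne
        have hpos : 0 < t ^ i * (1-t) ^ (m+e-i) :=
          lt_of_le_of_ne (hpw i) (Ne.symm hne)
        have := mul_pos hpos (hSw i hi)
        have hle := hcon i hi
        linarith
      have hone := bern_sum_eq_one (m+e) t
      have hzz : (1:ℝ) = 0 := by
        rw [← hone]
        apply Finset.sum_eq_zero
        intro i hi
        unfold bern
        rw [mul_assoc, hzero i hi, mul_zero]
      norm_num at hzz
  rw [hr' t ⟨ht0, ht1⟩, norm_smul, norm_inv, Real.norm_eq_abs, abs_of_pos hD,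
    inv_mul_le_iff₀ hD, mul_comm]
  calc ‖∑ j ∈ Finset.range (m+1), bern m j t • A j‖
      = ‖∑ i ∈ Finset.range (m+e+1), (t ^ i * (1-t) ^ (m+e-i)) •
          ∑ j ∈ Finset.Icc (i-e) (min m i),
            ((m.choose j : ℝ) * (e.choose (i-j) : ℝ)) • A j‖ := by rw [elev m e t A]
    _ ≤ ∑ i ∈ Finset.range (m+e+1), ‖(t ^ i * (1-t) ^ (m+e-i)) •
          ∑ j ∈ Finset.Icc (i-e) (min m i),
            ((m.choose j : ℝ) * (e.choose (i-j) : ℝ)) • A j‖ := norm_sum_le _ _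
    _ ≤ ∑ i ∈ Finset.range (m+e+1), (t ^ i * (1-t) ^ (m+e-i)) *
          (M * ∑ j ∈ Finset.Icc (i-e) (min m i),
            (m.choose j : ℝ) * (e.choose (i-j) : ℝ) * w j) := by
        apply Finset.sum_le_sum
        intro i hi
        rw [norm_smul, Real.norm_eq_abs, abs_of_nonneg (hpw i)]
        apply mul_le_mul_of_nonneg_left _ (hpw i)
        have hle := Finset.le_sup'
          (f := fun i => ‖∑ j ∈ Finset.Icc (i - e) (min m i),
              ((m.choose j : ℝ) * (e.choose (i - j) : ℝ)) • A j‖ /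
            ∑ j ∈ Finset.Icc (i - e) (min m i),
              (m.choose j : ℝ) * (e.choose (i - j) : ℝ) * w j) hi
        rw [← hM] at hle
        rw [div_le_iff₀ (hSw i hi)] at hle
        linarith
    _ = M * ∑ j ∈ Finset.range (m+1), w j * bern m j t := by
        rw [hDe, Finset.mul_sum]
        exact Finset.sum_congr rfl fun i _ => by ring
end
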